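/- (Lemma A.4, exact budget attainment.) Let X be a measurable space with probability measure μ, k ≥ 1, and q̂, ĉ : X → (Fin k → ℝ) measurable with each ĉ · i integrable with respect to μ. Let Λ = {λ ∈ ℝ : ∃ x ∈ X, ∃ i j with i ≠ j, q̂ x i − λ·ĉ x i = q̂ x j − λ·ĉ x j}, and assume Λ is finite. For λ ∈ ℝ let S_λ be the set of routing strategies s (s x i ≥ 0, ∑_i s x i = 1) putting zero mass on any model i with q̂ x i − λ·ĉ x i < max_j (q̂ x j − λ·ĉ x j). Suppose λ₁ < λ₂, s¹ ∈ S_λ₁ and s² ∈ S_λ₂ are measurable routing strategies with expected costs B₁ = ∫ (∑_i s¹ x i · ĉ x i) dμ and B₂ = ∫ (∑_i s² x i · ĉ x i) dμ (so B₂ ≤ B₁). Then for every B with B₂ ≤ B ≤ B₁ there exist λ ∈ [λ₁, λ₂] and a measurable routing strategy s ∈ S_λ whose expected cost equals exactly B. -/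

import Mathlib

open Finset MeasureTheory

/-- The maximum of a function over `Fin k`, given `0 < k`. -/
noncomputable def finMax {k : ℕ} (hk : 0 < k) (f : Fin k → ℝ) : ℝ :=
  Finset.univ.sup' (Finset.univ_nonempty_iff.mpr ⟨⟨0, hk⟩⟩) f

/-- `s` is a routing strategy: for every query `x`, `s x` is a probability
distribution over the `k` models. -/
def IsRoutingStrategy {X : Type*} {k : ℕ} (s : X → Fin k → ℝ) : Prop :=
  ∀ x, (∀ i, 0 ≤ s x i) ∧ ∑ i, s x i = 1

/-- The set `S_λ` of routing strategies that, for each query, only put mass on models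
attaining the maximal cost-quality tradeoff `q̂ x i - λ * ĉ x i`. -/
def Sset {X : Type*} {k : ℕ} (hk : 0 < k) (q c : X → Fin k → ℝ) (lam : ℝ) :
    Set (X → Fin k → ℝ) :=
  {s | IsRoutingStrategy s ∧
    ∀ x i, q x i - lam * c x i < finMax hk (fun j => q x j - lam * c x j) → s x i = 0}

/-- The set `Λ` of crossing points: levels `λ` at which two distinct models have equal
cost-quality tradeoff for some query. -/
def crossSet {X : Type*} {k : ℕ} (q c : X → Fin k → ℝ) : Set ℝ :=
  {lam | ∃ x : X, ∃ i j : Fin k, i ≠ j ∧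
    q x i - lam * c x i = q x j - lam * c x j}

section Aux

lemma le_finMax {k : ℕ} (hk : 0 < k) (f : Fin k → ℝ) (i : Fin k) : f i ≤ finMax hk f :=
  Finset.le_sup' f (Finset.mem_univ i)

lemma exists_finMax {k : ℕ} (hk : 0 < k) (f : Fin k → ℝ) : ∃ i, f i = finMax hk f := by
  obtain ⟨i, -, h⟩ := Finset.exists_mem_eq_sup' (Finset.univ_nonempty_iff.mpr ⟨⟨0, hk⟩⟩) f
  exact ⟨i, h.symm⟩

variable {X : Type*} [MeasurableSpace X] {k : ℕ}

lemma rs_le_one {s : X → Fin k → ℝ} (hs : IsRoutingStrategy s) (x : X) (i : Fin k) :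
    s x i ≤ 1 := by
  have := Finset.single_le_sum (f := fun j => s x j) (fun j _ => (hs x).1 j) (Finset.mem_univ i)
  simpa [(hs x).2] using this

lemma cost_integrable (μ : Measure X) (c : X → Fin k → ℝ)
    (hc : ∀ i, Measurable fun x => c x i) (hcint : ∀ i, Integrable (fun x => c x i) μ)
    {s : X → Fin k → ℝ} (hs : IsRoutingStrategy s) (hms : ∀ i, Measurable fun x => s x i) :
    Integrable (fun x => ∑ i, s x i * c x i) μ := by
  apply integrable_finset_sum
  intro i _
  exact (hcint i).bdd_mul ((hms i).aestronglyMeasurable)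
    (c := 1) (ae_of_all _ fun x => by rw [Real.norm_eq_abs, abs_of_nonneg ((hs x).1 i)]; exact rs_le_one hs x i)

lemma pointwise_mono (hk : 0 < k) (q c : X → Fin k → ℝ) {lam lam' : ℝ} (hlt : lam < lam')
    {s s' : X → Fin k → ℝ} (hs : s ∈ Sset hk q c lam) (hs' : s' ∈ Sset hk q c lam') (x : X) :
    ∑ i, s' x i * c x i ≤ ∑ i, s x i * c x i := by
  have h1 : ∑ i, s' x i * c x i = ∑ i, ∑ j, s' x i * s x j * c x i := by
    refine Finset.sum_congr rfl fun i _ => ?_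
    rw [← Finset.sum_mul, ← Finset.mul_sum]
    rw [(hs.1 x).2, mul_one]
  have h2 : ∑ j, s x j * c x j = ∑ i, ∑ j, s' x i * s x j * c x j := by
    rw [Finset.sum_comm]
    refine Finset.sum_congr rfl fun j _ => ?_
    have : ∑ i, s' x i * s x j * c x j = (∑ i, s' x i) * (s x j * c x j) := by
      rw [Finset.sum_mul]; exact Finset.sum_congr rfl fun i _ => mul_assoc _ _ _
    rw [this, (hs'.1 x).2, one_mul]
  rw [h1, h2]
  refine Finset.sum_le_sum fun i _ => Finset.sum_le_sum fun j _ => ?_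
  rcases eq_or_lt_of_le ((hs'.1 x).1 i) with hi | hi
  · simp [← hi]
  rcases eq_or_lt_of_le ((hs.1 x).1 j) with hj | hj
  · simp [← hj]
  have hfi : finMax hk (fun j => q x j - lam' * c x j) ≤ q x i - lam' * c x i := by
    by_contra h
    exact absurd (hs'.2 x i (lt_of_not_ge h)) (ne_of_gt hi)
  have hfj : finMax hk (fun j => q x j - lam * c x j) ≤ q x j - lam * c x j := by
    by_contra h
    exact absurd (hs.2 x j (lt_of_not_ge h)) (ne_of_gt hj)
  have e1 : q x j - lam' * c x j ≤ q x i - lam' * c x i :=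
    le_trans (le_finMax hk (fun j => q x j - lam' * c x j) j) hfi
  have e2 : q x i - lam * c x i ≤ q x j - lam * c x j :=
    le_trans (le_finMax hk (fun i => q x i - lam * c x i) i) hfj
  have hcc : c x i ≤ c x j := by nlinarith
  have := mul_le_mul_of_nonneg_left hcc (mul_nonneg hi.le hj.le)
  nlinarith

lemma cost_mono (μ : Measure X) (hk : 0 < k) (q c : X → Fin k → ℝ)
    (hc : ∀ i, Measurable fun x => c x i) (hcint : ∀ i, Integrable (fun x => c x i) μ)
    {lam lam' : ℝ} (hlt : lam < lam')
    {s s' : X → Fin k → ℝ} (hs : s ∈ Sset hk q c lam) (hs' : s' ∈ Sset hk q c lam')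
    (hms : ∀ i, Measurable fun x => s x i) (hms' : ∀ i, Measurable fun x => s' x i) :
    (∫ x, (∑ i, s' x i * c x i) ∂μ) ≤ ∫ x, (∑ i, s x i * c x i) ∂μ :=
  integral_mono (cost_integrable μ c hc hcint hs'.1 hms')
    (cost_integrable μ c hc hcint hs.1 hms) (pointwise_mono hk q c hlt hs hs')

set_option linter.unusedSectionVars false

lemma mix_strategy (μ : Measure X) (hk : 0 < k) (q c : X → Fin k → ℝ)
    (hc : ∀ i, Measurable fun x => c x i) (hcint : ∀ i, Integrable (fun x => c x i) μ)
    (lam : ℝ) {s s' : X → Fin k → ℝ}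
    (hs : s ∈ Sset hk q c lam) (hs' : s' ∈ Sset hk q c lam)
    (hms : ∀ i, Measurable fun x => s x i) (hms' : ∀ i, Measurable fun x => s' x i)
    (B : ℝ) (h1 : (∫ x, (∑ i, s' x i * c x i) ∂μ) ≤ B)
    (h2 : B ≤ ∫ x, (∑ i, s x i * c x i) ∂μ) :
    ∃ sm ∈ Sset hk q c lam, (∀ i, Measurable fun x => sm x i) ∧
      (∫ x, (∑ i, sm x i * c x i) ∂μ) = B := by
  set cs := ∫ x, (∑ i, s x i * c x i) ∂μ with hcs
  set cs' := ∫ x, (∑ i, s' x i * c x i) ∂μ with hcs'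
  rcases eq_or_lt_of_le (h1.trans h2) with heq | hltc
  · exact ⟨s', hs', hms', by rw [← hcs']; linarith⟩
  set t := (B - cs') / (cs - cs') with ht
  have ht0 : 0 ≤ t := div_nonneg (by linarith) (by linarith)
  have ht1 : t ≤ 1 := by
    rw [div_le_one (by linarith)]; linarith
  refine ⟨fun x i => t * s x i + (1 - t) * s' x i, ⟨?_, ?_⟩, ?_, ?_⟩
  · intro x
    constructor
    · intro i
      show 0 ≤ t * s x i + (1 - t) * s' x i
      have := (hs.1 x).1 i; have := (hs'.1 x).1 i
      nlinarith
    · rw [Finset.sum_add_distrib, ← Finset.mul_sum, ← Finset.mul_sum,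
        (hs.1 x).2, (hs'.1 x).2]
      ring
  · intro x i hlt
    show t * s x i + (1 - t) * s' x i = 0
    rw [hs.2 x i hlt, hs'.2 x i hlt]; ring
  · intro i
    exact ((hms i).const_mul t).add ((hms' i).const_mul (1 - t))
  · have key : ∀ x, (∑ i, (t * s x i + (1 - t) * s' x i) * c x i) =
        t * (∑ i, s x i * c x i) + (1 - t) * (∑ i, s' x i * c x i) := by
      intro x
      rw [Finset.mul_sum, Finset.mul_sum, ← Finset.sum_add_distrib]
      exact Finset.sum_congr rfl fun i _ => by ring
    simp_rw [key]
    rw [integral_add (((cost_integrable μ c hc hcint hs.1 hms).const_mul t))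
      (((cost_integrable μ c hc hcint hs'.1 hms').const_mul (1 - t)))]
    rw [integral_const_mul, integral_const_mul, ← hcs, ← hcs']
    have hD : cs - cs' ≠ 0 := by linarith
    field_simp [ht]
    have hmul : t * (cs - cs') = B - cs' := by rw [ht]; exact div_mul_cancel₀ _ hD
    linear_combination hmul

/-- The canonical strategy at level `lam`: put all mass on the least maximizer. -/
noncomputable def sCan (hk : 0 < k) (q c : X → Fin k → ℝ) (lam : ℝ) : X → Fin k → ℝ :=
  fun x i => if (q x i - lam * c x i = finMax hk (fun j => q x j - lam * c x j) ∧
      ∀ j, j < i → q x j - lam * c x j ≠ finMax hk (fun j => q x j - lam * c x j)) then 1 else 0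

lemma sCan_mem (hk : 0 < k) (q c : X → Fin k → ℝ) (lam : ℝ) :
    sCan hk q c lam ∈ Sset hk q c lam := by
  have huniq : ∀ x : X, ∃! i : Fin k,
      (q x i - lam * c x i = finMax hk (fun j => q x j - lam * c x j) ∧
      ∀ j, j < i → q x j - lam * c x j ≠ finMax hk (fun j => q x j - lam * c x j)) := by
    intro x
    obtain ⟨i, hi⟩ := exists_finMax hk (fun j => q x j - lam * c x j)
    classical
    set F : Finset (Fin k) := Finset.univ.filter
      (fun j => q x j - lam * c x j = finMax hk (fun j => q x j - lam * c x j)) with hF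
    have hFne : F.Nonempty := ⟨i, by simp [hF, hi]⟩
    refine ⟨F.min' hFne, ⟨?_, ?_⟩, ?_⟩
    · have := F.min'_mem hFne
      simpa [hF] using this
    · intro j hj hmem
      have : F.min' hFne ≤ j := F.min'_le j (by simp [hF, hmem])
      exact absurd hj (not_lt.mpr this)
    · rintro y ⟨hy1, hy2⟩
      have h1 : F.min' hFne ≤ y := F.min'_le y (by simp [hF, hy1])
      rcases eq_or_lt_of_le h1 with h | h
      · exact h.symm
      · exact absurd (Finset.mem_filter.mp (F.min'_mem hFne)).2 (hy2 _ h)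
  constructor
  · intro x
    obtain ⟨i₀, hP, hU⟩ := huniq x
    constructor
    · intro i; unfold sCan; split <;> norm_num
    · unfold sCan
      have : ∀ i : Fin k, (if (q x i - lam * c x i = finMax hk (fun j => q x j - lam * c x j) ∧
          ∀ j, j < i → q x j - lam * c x j ≠ finMax hk (fun j => q x j - lam * c x j)) then (1:ℝ) else 0)
          = if i = i₀ then 1 else 0 := by
        intro i
        by_cases h : i = i₀
        · subst h; rw [if_pos hP, if_pos rfl]
        · rw [if_neg (fun hp => h (hU i hp)), if_neg h]
      rw [Finset.sum_congr rfl (fun i _ => this i)]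
      simp
  · intro x i hlt
    unfold sCan
    rw [if_neg]
    rintro ⟨h, -⟩
    exact absurd h (ne_of_lt hlt)

lemma sCan_meas (hk : 0 < k) (q c : X → Fin k → ℝ) (lam : ℝ)
    (hq : ∀ i, Measurable fun x => q x i) (hc : ∀ i, Measurable fun x => c x i) :
    ∀ i, Measurable fun x => sCan hk q c lam x i := by
  intro i
  have hg : ∀ j : Fin k, Measurable fun x => q x j - lam * c x j :=
    fun j => (hq j).sub ((hc j).const_mul lam)
  have hM : Measurable fun x => finMax hk (fun j => q x j - lam * c x j) := by
    have : (fun x => finMax hk (fun j => q x j - lam * c x j)) =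
        Finset.univ.sup' (Finset.univ_nonempty_iff.mpr ⟨⟨0, hk⟩⟩)
          (fun j => fun x => q x j - lam * c x j) := by
      funext x
      rw [Finset.sup'_apply]
      rfl
    rw [this]
    exact Finset.measurable_sup' _ (fun j _ => hg j)
  have hA : MeasurableSet {x : X | q x i - lam * c x i =
      finMax hk (fun j => q x j - lam * c x j) ∧
      ∀ j, j < i → q x j - lam * c x j ≠ finMax hk (fun j => q x j - lam * c x j)} := by
    have h1 : MeasurableSet {x : X | q x i - lam * c x i =
        finMax hk (fun j => q x j - lam * c x j)} :=
      measurableSet_eq_fun (hg i) hM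
    have h2 : MeasurableSet {x : X | ∀ j, j < i →
        q x j - lam * c x j ≠ finMax hk (fun j => q x j - lam * c x j)} := by
      have : {x : X | ∀ j, j < i →
          q x j - lam * c x j ≠ finMax hk (fun j => q x j - lam * c x j)} =
          ⋂ (j : Fin k) (_ : j < i),
            {x : X | q x j - lam * c x j = finMax hk (fun j => q x j - lam * c x j)}ᶜ := by
        ext x; simp [Set.mem_iInter]
      rw [this]
      exact MeasurableSet.iInter fun j => MeasurableSet.iInter fun _ =>
        (measurableSet_eq_fun (hg j) hM).compl
    exact h1.inter h2
  unfold sCan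
  exact Measurable.ite hA measurable_const measurable_const

omit [MeasurableSpace X] in
lemma no_cross_mono (q c : X → Fin k → ℝ) {lam lam' : ℝ} (hne : lam ≠ lam') (x : X)
    {i j : Fin k}
    (h1 : q x i - lam * c x i < q x j - lam * c x j)
    (h2 : q x j - lam' * c x j ≤ q x i - lam' * c x i) :
    ∃ t, ((lam < t ∧ t ≤ lam') ∨ (lam' ≤ t ∧ t < lam)) ∧ t ∈ crossSet q c := by
  have hij : i ≠ j := by rintro rfl; exact lt_irrefl _ h1
  set g : ℝ → ℝ := fun t => (q x j - t * c x j) - (q x i - t * c x i) with hgdef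
  have hg : Continuous g := by
    apply Continuous.sub <;> apply Continuous.sub <;>
      first | exact continuous_const | exact (continuous_id.mul continuous_const)
  have hg1 : 0 < g lam := by simp only [hgdef]; linarith
  have hg2 : g lam' ≤ 0 := by simp only [hgdef]; linarith
  have hcross : ∀ t : ℝ, g t = 0 → t ∈ crossSet q c := by
    intro t ht
    simp only [hgdef] at ht
    exact ⟨x, i, j, hij, by linarith⟩
  rcases eq_or_lt_of_le hg2 with heq | hglt
  · refine ⟨lam', ?_, hcross lam' heq⟩
    rcases hne.lt_or_gt with h | h
    · exact Or.inl ⟨h, le_refl _⟩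
    · exact Or.inr ⟨le_refl _, h⟩
  · rcases hne.lt_or_gt with h | h
    · obtain ⟨t, ht, hgt⟩ := intermediate_value_Ioo' h.le hg.continuousOn ⟨hglt, hg1⟩
      exact ⟨t, Or.inl ⟨ht.1, ht.2.le⟩, hcross t hgt⟩
    · obtain ⟨t, ht, hgt⟩ := intermediate_value_Ioo h.le hg.continuousOn ⟨hglt, hg1⟩
      exact ⟨t, Or.inr ⟨ht.1.le, ht.2⟩, hcross t hgt⟩

omit [MeasurableSpace X] in
lemma Sset_endpoints (hk : 0 < k) (q c : X → Fin k → ℝ) {lam₁ lam₂ lamS : ℝ}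
    (h1 : lam₁ < lamS) (h2 : lamS < lam₂)
    (hnc : ∀ t ∈ Set.Ioo lam₁ lam₂, t ∉ crossSet q c)
    {s : X → Fin k → ℝ} (hsS : s ∈ Sset hk q c lamS) :
    s ∈ Sset hk q c lam₁ ∧ s ∈ Sset hk q c lam₂ := by
  constructor <;> refine ⟨hsS.1, ?_⟩
  · intro x i hlt
    obtain ⟨j, hj⟩ := exists_finMax hk (fun j => q x j - lam₁ * c x j)
    rw [← hj] at hlt
    apply hsS.2 x i
    by_contra hcon
    push_neg at hcon
    have hji : q x j - lamS * c x j ≤ q x i - lamS * c x i :=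
      le_trans (le_finMax hk (fun j => q x j - lamS * c x j) j) hcon
    obtain ⟨t, htb, htc⟩ := no_cross_mono q c (ne_of_lt h1) x hlt hji
    rcases htb with ⟨ha, hb⟩ | ⟨ha, hb⟩
    · exact hnc t ⟨ha, lt_of_le_of_lt hb h2⟩ htc
    · linarith [le_trans ha (le_of_lt hb)]
  · intro x i hlt
    obtain ⟨j, hj⟩ := exists_finMax hk (fun j => q x j - lam₂ * c x j)
    rw [← hj] at hlt
    apply hsS.2 x i
    by_contra hcon
    push_neg at hcon
    have hji : q x j - lamS * c x j ≤ q x i - lamS * c x i :=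
      le_trans (le_finMax hk (fun j => q x j - lamS * c x j) j) hcon
    obtain ⟨t, htb, htc⟩ := no_cross_mono q c (ne_of_gt h2) x hlt hji
    rcases htb with ⟨ha, hb⟩ | ⟨ha, hb⟩
    · linarith [lt_of_lt_of_le ha hb]
    · exact hnc t ⟨lt_of_lt_of_le h1 ha, hb⟩ htc

lemma no_cross_case (μ : Measure X) [IsProbabilityMeasure μ]
    (hk : 0 < k) (q c : X → Fin k → ℝ)
    (hq : ∀ i, Measurable fun x => q x i) (hc : ∀ i, Measurable fun x => c x i)
    (hcint : ∀ i, Integrable (fun x => c x i) μ)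
    {lam₁ lam₂ : ℝ} (hlt : lam₁ < lam₂)
    (hempty : crossSet q c ∩ Set.Ioo lam₁ lam₂ = ∅)
    {s₁ s₂ : X → Fin k → ℝ}
    (hs₁ : s₁ ∈ Sset hk q c lam₁) (hs₂ : s₂ ∈ Sset hk q c lam₂)
    (hms₁ : ∀ i, Measurable fun x => s₁ x i) (hms₂ : ∀ i, Measurable fun x => s₂ x i)
    (B : ℝ)
    (hB₂ : (∫ x, (∑ i, s₂ x i * c x i) ∂μ) ≤ B)
    (hB₁ : B ≤ ∫ x, (∑ i, s₁ x i * c x i) ∂μ) :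
    ∃ lam ∈ Set.Icc lam₁ lam₂, ∃ s ∈ Sset hk q c lam,
      (∀ i, Measurable fun x => s x i) ∧
      (∫ x, (∑ i, s x i * c x i) ∂μ) = B := by
  have hnc : ∀ t ∈ Set.Ioo lam₁ lam₂, t ∉ crossSet q c := by
    intro t ht htc
    exact absurd (Set.mem_inter htc ht) (by rw [hempty]; exact Set.notMem_empty t)
  set lamS := (lam₁ + lam₂) / 2 with hlamS
  have h1 : lam₁ < lamS := by rw [hlamS]; linarith
  have h2 : lamS < lam₂ := by rw [hlamS]; linarith
  have hsS := sCan_mem hk q c lamS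
  have hmS := sCan_meas hk q c lamS hq hc
  obtain ⟨hA, hB⟩ := Sset_endpoints hk q c h1 h2 hnc hsS
  rcases le_total B (∫ x, (∑ i, sCan hk q c lamS x i * c x i) ∂μ) with hle | hle
  · obtain ⟨sm, hsm, hmsm, hcost⟩ := mix_strategy μ hk q c hc hcint lam₂ hB hs₂ hmS hms₂ B hB₂ hle
    exact ⟨lam₂, ⟨le_of_lt hlt, le_refl _⟩, sm, hsm, hmsm, hcost⟩
  · obtain ⟨sm, hsm, hmsm, hcost⟩ := mix_strategy μ hk q c hc hcint lam₁ hs₁ hA hms₁ hmS B hle hB₁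
    exact ⟨lam₁, ⟨le_refl _, le_of_lt hlt⟩, sm, hsm, hmsm, hcost⟩

lemma aux_ind (μ : Measure X) [IsProbabilityMeasure μ]
    (hk : 0 < k) (q c : X → Fin k → ℝ)
    (hq : ∀ i, Measurable fun x => q x i) (hc : ∀ i, Measurable fun x => c x i)
    (hcint : ∀ i, Integrable (fun x => c x i) μ)
    (hfin : (crossSet q c).Finite) (n : ℕ) :
    ∀ lam₁ lam₂ : ℝ, lam₁ < lam₂ → (crossSet q c ∩ Set.Ioo lam₁ lam₂).ncard ≤ n →
    ∀ s₁ s₂ : X → Fin k → ℝ, s₁ ∈ Sset hk q c lam₁ → s₂ ∈ Sset hk q c lam₂ →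
    (∀ i, Measurable fun x => s₁ x i) → (∀ i, Measurable fun x => s₂ x i) →
    ∀ B : ℝ, (∫ x, (∑ i, s₂ x i * c x i) ∂μ) ≤ B →
    B ≤ (∫ x, (∑ i, s₁ x i * c x i) ∂μ) →
    ∃ lam ∈ Set.Icc lam₁ lam₂, ∃ s ∈ Sset hk q c lam,
      (∀ i, Measurable fun x => s x i) ∧
      (∫ x, (∑ i, s x i * c x i) ∂μ) = B := by
  induction n with
  | zero =>
    intro lam₁ lam₂ hlt hcard s₁ s₂ hs₁ hs₂ hms₁ hms₂ B hB₂ hB₁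
    have hfin' : (crossSet q c ∩ Set.Ioo lam₁ lam₂).Finite :=
      hfin.subset (Set.inter_subset_left)
    have hempty : crossSet q c ∩ Set.Ioo lam₁ lam₂ = ∅ :=
      (Set.ncard_eq_zero hfin').mp (Nat.le_zero.mp hcard)
    exact no_cross_case μ hk q c hq hc hcint hlt hempty hs₁ hs₂ hms₁ hms₂ B hB₂ hB₁
  | succ n ih =>
    intro lam₁ lam₂ hlt hcard s₁ s₂ hs₁ hs₂ hms₁ hms₂ B hB₂ hB₁
    have hfin' : (crossSet q c ∩ Set.Ioo lam₁ lam₂).Finite :=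
      hfin.subset (Set.inter_subset_left)
    rcases Set.eq_empty_or_nonempty (crossSet q c ∩ Set.Ioo lam₁ lam₂) with hempty | hne
    · exact no_cross_case μ hk q c hq hc hcint hlt hempty hs₁ hs₂ hms₁ hms₂ B hB₂ hB₁
    · obtain ⟨lamM, hMc, hMo⟩ := hne
      have hM1 : lam₁ < lamM := hMo.1
      have hM2 : lamM < lam₂ := hMo.2
      have hsM := sCan_mem hk q c lamM
      have hmM := sCan_meas hk q c lamM hq hc
      have hcostM1 : (∫ x, (∑ i, sCan hk q c lamM x i * c x i) ∂μ) ≤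
          ∫ x, (∑ i, s₁ x i * c x i) ∂μ :=
        cost_mono μ hk q c hc hcint hM1 hs₁ hsM hms₁ hmM
      have hcostM2 : (∫ x, (∑ i, s₂ x i * c x i) ∂μ) ≤
          ∫ x, (∑ i, sCan hk q c lamM x i * c x i) ∂μ :=
        cost_mono μ hk q c hc hcint hM2 hsM hs₂ hmM hms₂
      have hcard' : ∀ a b : ℝ, Set.Ioo a b ⊆ Set.Ioo lam₁ lam₂ → lamM ∉ Set.Ioo a b →
          (crossSet q c ∩ Set.Ioo a b).ncard ≤ n := by
        intro a b hsub hnm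
        have hsub2 : crossSet q c ∩ Set.Ioo a b ⊆
            (crossSet q c ∩ Set.Ioo lam₁ lam₂) \ {lamM} := by
          rintro t ⟨ht1, ht2⟩
          refine ⟨⟨ht1, hsub ht2⟩, ?_⟩
          simp only [Set.mem_singleton_iff]
          rintro rfl
          exact hnm ht2
        have hlt2 : ((crossSet q c ∩ Set.Ioo lam₁ lam₂) \ {lamM}).ncard <
            (crossSet q c ∩ Set.Ioo lam₁ lam₂).ncard :=
          Set.ncard_lt_ncard (Set.sdiff_singleton_ssubset.mpr ⟨hMc, hMo⟩) hfin'
        have := Set.ncard_le_ncard hsub2 (hfin'.diff)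
        omega
      rcases le_total B (∫ x, (∑ i, sCan hk q c lamM x i * c x i) ∂μ) with hle | hle
      · obtain ⟨lam, hlam, hrest⟩ := ih lamM lam₂ hM2
          (hcard' lamM lam₂ (Set.Ioo_subset_Ioo (le_of_lt hM1) (le_refl _))
            (fun h => lt_irrefl _ h.1))
          (sCan hk q c lamM) s₂ hsM hs₂ hmM hms₂ B hB₂ hle
        exact ⟨lam, ⟨le_trans (le_of_lt hM1) hlam.1, hlam.2⟩, hrest⟩
      · obtain ⟨lam, hlam, hrest⟩ := ih lam₁ lamM hM1
          (hcard' lam₁ lamM (Set.Ioo_subset_Ioo (le_refl _) (le_of_lt hM2))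
            (fun h => lt_irrefl _ h.2))
          s₁ (sCan hk q c lamM) hs₁ hsM hms₁ hmM B hle hB₁
        exact ⟨lam, ⟨hlam.1, le_trans hlam.2 (le_of_lt hM2)⟩, hrest⟩

end Aux

/-- Lemma A.4: if `s¹ ∈ S_λ₁` has expected cost `B₁` and `s² ∈ S_λ₂` has expected cost `B₂`
(with `λ₁ < λ₂` and finitely many crossing points), then every budget `B ∈ [B₂, B₁]` is exactly
attained by some measurable routing strategy in `S_λ` for some `λ ∈ [λ₁, λ₂]`. -/
theorem exact_budget_attainment {X : Type*} [MeasurableSpace X]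
    (μ : Measure X) [IsProbabilityMeasure μ]
    (k : ℕ) (hk : 0 < k) (q c : X → Fin k → ℝ)
    (hq : ∀ i, Measurable fun x => q x i) (hc : ∀ i, Measurable fun x => c x i)
    (hcint : ∀ i, Integrable (fun x => c x i) μ)
    (hfin : (crossSet q c).Finite)
    (lam₁ lam₂ : ℝ) (hlt : lam₁ < lam₂)
    (s₁ s₂ : X → Fin k → ℝ)
    (hs₁ : s₁ ∈ Sset hk q c lam₁) (hs₂ : s₂ ∈ Sset hk q c lam₂)
    (hms₁ : ∀ i, Measurable fun x => s₁ x i) (hms₂ : ∀ i, Measurable fun x => s₂ x i)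
    (B : ℝ)
    (hB₂ : (∫ x, (∑ i, s₂ x i * c x i) ∂μ) ≤ B)
    (hB₁ : B ≤ ∫ x, (∑ i, s₁ x i * c x i) ∂μ) :
    ∃ lam ∈ Set.Icc lam₁ lam₂, ∃ s ∈ Sset hk q c lam,
      (∀ i, Measurable fun x => s x i) ∧
      (∫ x, (∑ i, s x i * c x i) ∂μ) = B := by
  exact aux_ind μ hk q c hq hc hcint hfin
    (crossSet q c ∩ Set.Ioo lam₁ lam₂).ncard lam₁ lam₂ hlt (le_refl _)
    s₁ s₂ hs₁ hs₂ hms₁ hms₂ B hB₂ hB₁
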